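/- Let p, q, r be probability measures on a common measurable space, let γ ∈ (0, 1], ε ≥ 0, and δ, δ₂ ≥ 0. Suppose H_{e^ε}(q‖p) ≤ δ and H_{e^ε}(q‖r) ≤ δ, where H_α(P‖Q) = sup over measurable sets S of (P(S) − α·Q(S)). Let M = (1−γ)p + γq and let P = (1−t)M + tN for some probability measure N and some t ∈ [0, δ₂]. Then the pair (P, (1−γ)p + γr) is (log(1 + γ(e^ε − 1)), γδ + δ₂)-indistinguishable. -/
import Mathlib


open MeasureTheory

/-- `(P, Q)` are `(ε, δ)`-indistinguishable: for every measurable set `S`,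
`P(S) ≤ e^ε · Q(S) + δ`. -/
def Indist {X : Type*} [MeasurableSpace X] (P Q : Measure X) (ε δ : ℝ) : Prop :=
  ∀ S : Set X, MeasurableSet S → (P S).toReal ≤ Real.exp ε * (Q S).toReal + δ

/-- Hockey-stick divergence `H_α(P‖Q) = sup_{S measurable} (P(S) − α·Q(S))`. -/
noncomputable def hsDiv {X : Type*} [MeasurableSpace X] (α : ℝ) (P Q : Measure X) : ℝ :=
  ⨆ S : {S : Set X // MeasurableSet S}, ((P S.1).toReal - α * (Q S.1).toReal)

/-- The mixture measure `(1−γ)·p + γ·q`. -/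
noncomputable def mix {X : Type*} [MeasurableSpace X] (γ : ℝ) (p q : Measure X) : Measure X :=
  ENNReal.ofReal (1 - γ) • p + ENNReal.ofReal γ • q

lemma mix_apply_toReal {X : Type*} [MeasurableSpace X] (γ : ℝ) (p q : Measure X)
    [IsFiniteMeasure p] [IsFiniteMeasure q] (S : Set X) :
    ((mix γ p q) S).toReal = (1 - γ).toNNReal * (p S).toReal + γ.toNNReal * (q S).toReal := by
  simp only [mix, Measure.add_apply, Measure.smul_apply, smul_eq_mul]
  rw [ENNReal.toReal_add (ENNReal.mul_ne_top ENNReal.ofReal_ne_top (measure_ne_top p S))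
    (ENNReal.mul_ne_top ENNReal.ofReal_ne_top (measure_ne_top q S)),
    ENNReal.toReal_mul, ENNReal.toReal_mul]
  rfl

lemma hsDiv_le {X : Type*} [MeasurableSpace X] (α : ℝ) (P Q : Measure X)
    [IsProbabilityMeasure P] (hα : 0 ≤ α) (S : Set X) (hS : MeasurableSet S) :
    (P S).toReal - α * (Q S).toReal ≤ hsDiv α P Q := by
  have hb : BddAbove (Set.range fun S : {S : Set X // MeasurableSet S} =>
      ((P S.1).toReal - α * (Q S.1).toReal)) := by
    refine ⟨1, ?_⟩
    rintro x ⟨T, rfl⟩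
    have h1 : (P T.1).toReal ≤ 1 := by
      simpa using ENNReal.toReal_mono ENNReal.one_ne_top (prob_le_one (μ := P) (s := T.1))
    have h2 : 0 ≤ α * (Q T.1).toReal := mul_nonneg hα ENNReal.toReal_nonneg
    simp only []
    linarith
  exact le_ciSup hb ⟨S, hS⟩

/-- Measure-theoretic content of part 3 of Theorem 1: amplification by mixing,
combined with a failure component of mass `t ≤ δ₂`, gives
`(log(1 + γ(e^ε − 1)), γδ + δ₂)`-indistinguishability. -/
theorem crt_bayesian_confidentiality
    {X : Type*} [MeasurableSpace X] (p q r N : Measure X)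
    [IsProbabilityMeasure p] [IsProbabilityMeasure q] [IsProbabilityMeasure r]
    [IsProbabilityMeasure N]
    (γ ε δ δ₂ t : ℝ) (hγ0 : 0 < γ) (hγ1 : γ ≤ 1) (hε : 0 ≤ ε)
    (hδ : 0 ≤ δ) (hδ₂ : 0 ≤ δ₂) (ht0 : 0 ≤ t) (ht : t ≤ δ₂) (ht1 : t ≤ 1)
    (hqp : hsDiv (Real.exp ε) q p ≤ δ) (hqr : hsDiv (Real.exp ε) q r ≤ δ) :
    Indist (mix t (mix γ p q) N) (mix γ p r)
      (Real.log (1 + γ * (Real.exp ε - 1))) (γ * δ + δ₂) := by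
  intro S hS
  set E := Real.exp ε with hE
  have hE1 : 1 ≤ E := by
    rw [hE]; calc (1:ℝ) = Real.exp 0 := (Real.exp_zero).symm
      _ ≤ Real.exp ε := Real.exp_le_exp.2 hε
  have hEpos : (0:ℝ) < 1 + γ * (E - 1) := by nlinarith
  have hexp : Real.exp (Real.log (1 + γ * (E - 1))) = 1 + γ * (E - 1) :=
    Real.exp_log hEpos
  set a := (p S).toReal with ha
  set b := (q S).toReal with hb
  set c := (r S).toReal with hc
  set n := (N S).toReal with hn
  have hle1 : ∀ (μ : Measure X) [IsProbabilityMeasure μ], (μ S).toReal ≤ 1 := by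
    intro μ _
    simpa using ENNReal.toReal_mono ENNReal.one_ne_top (prob_le_one (μ := μ) (s := S))
  have ha1 : a ≤ 1 := hle1 p
  have hb1 : b ≤ 1 := hle1 q
  have hc1 : c ≤ 1 := hle1 r
  have hn1 : n ≤ 1 := hle1 N
  have ha0 : 0 ≤ a := ENNReal.toReal_nonneg
  have hb0 : 0 ≤ b := ENNReal.toReal_nonneg
  have hc0 : 0 ≤ c := ENNReal.toReal_nonneg
  have hn0 : 0 ≤ n := ENNReal.toReal_nonneg
  have hE0 : (0:ℝ) ≤ E := le_trans zero_le_one hE1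
  have h1 : b - E * a ≤ δ := le_trans (hsDiv_le E q p hE0 S hS) hqp
  have h2 : b - E * c ≤ δ := le_trans (hsDiv_le E q r hE0 S hS) hqr
  -- key inequality : b ≤ c + (E-1)*((1-γ)*a + γ*c) + δ
  have key : b ≤ c + (E - 1) * ((1 - γ) * a + γ * c) + δ := by
    nlinarith [mul_nonneg (mul_nonneg (sub_nonneg.2 hγ1) (sub_nonneg.2 hE1))
        (by linarith : (0:ℝ) ≤ E * a + δ - b),
      mul_nonneg (by nlinarith : (0:ℝ) ≤ 1 + γ * (E - 1))
        (by linarith : (0:ℝ) ≤ E * c + δ - b)]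
  have hmixPQ : ((mix γ p q) S).toReal = (1 - γ) * a + γ * b := by
    rw [mix_apply_toReal]
    rw [Real.coe_toNNReal _ (by linarith), Real.coe_toNNReal _ hγ0.le]
  have hmixPR : ((mix γ p r) S).toReal = (1 - γ) * a + γ * c := by
    rw [mix_apply_toReal]
    rw [Real.coe_toNNReal _ (by linarith), Real.coe_toNNReal _ hγ0.le]
  have hM1 : ((mix γ p q) S).toReal ≤ 1 := by
    rw [hmixPQ]; nlinarith
  have hM0 : 0 ≤ ((mix γ p q) S).toReal := ENNReal.toReal_nonneg
  have : ((mix t (mix γ p q) N) S).toReal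
      = (1 - t) * ((mix γ p q) S).toReal + t * n := by
    have : IsFiniteMeasure (mix γ p q) := by
      constructor
      rw [mix]
      simp only [Measure.add_apply, Measure.smul_apply, smul_eq_mul]
      exact ENNReal.add_lt_top.2 ⟨ENNReal.mul_lt_top ENNReal.ofReal_lt_top (measure_lt_top p _),
        ENNReal.mul_lt_top ENNReal.ofReal_lt_top (measure_lt_top q _)⟩
    rw [mix_apply_toReal]
    rw [Real.coe_toNNReal _ (by linarith), Real.coe_toNNReal _ ht0]
  rw [this, hmixPQ, hmixPR, hexp]
  nlinarith [mul_nonneg ht0 hn0, mul_nonneg ht0 hM0, mul_le_mul_of_nonneg_left key hγ0.le,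
    mul_nonneg ht0 (sub_nonneg.2 hM1), mul_le_mul_of_nonneg_left hn1 ht0]
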